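/- arXiv:2504.14169 — 4 statements merged into one kernel-verified Lean document; each statement's English description precedes it below -/
import Mathlib

section
/- Exponential tilting identity: Let (X,Y,R) be random variables with R ∈ {0,1}, finite state spaces and all joint probabilities positive. Define Γ(x,y) = log[ P(R=1|x,y)(1−P(R=1|x,0)) / ((1−P(R=1|x,y))P(R=1|x,0)) ]. Then for every x,y: P(Y=y | X=x, R=0) = exp(−Γ(x,y))·P(Y=y | X=x, R=1) / E[exp(−Γ(x,Y)) | X=x, R=1]. -/
/-- Probability of an event `A` under weights `w` on a finite sample space. -/
noncomputable def Pr {Ω : Type*} [Fintype Ω] (w : Ω → ℝ) (A : Ω → Prop) : ℝ :=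
  ∑ ω, Set.indicator {ω' | A ω'} w ω

/-- Expectation of `f` under weights `w`. -/
noncomputable def Ex {Ω : Type*} [Fintype Ω] (w : Ω → ℝ) (f : Ω → ℝ) : ℝ :=
  ∑ ω, w ω * f ω

/-- Conditional probability P(A | B). -/
noncomputable def cPr {Ω : Type*} [Fintype Ω] (w : Ω → ℝ) (A B : Ω → Prop) : ℝ :=
  Pr w (fun ω => A ω ∧ B ω) / Pr w B

/-- Conditional expectation E[f | B]. -/
noncomputable def cEx {Ω : Type*} [Fintype Ω] (w : Ω → ℝ) (f : Ω → ℝ) (B : Ω → Prop) : ℝ :=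
  (∑ ω, Set.indicator {ω' | B ω'} (fun ω' => w ω' * f ω') ω) / Pr w B

/-- Real-valued indicator of a Boolean. -/
noncomputable def ind (b : Bool) : ℝ := if b then 1 else 0

/-- Log odds ratio function of a propensity `π`, with reference outcome `0`. -/
noncomputable def GammaOf {𝒳 𝒴 : Type*} [Zero 𝒴] (π : 𝒳 → 𝒴 → ℝ) (x : 𝒳) (y : 𝒴) : ℝ :=
  Real.log (π x y * (1 - π x 0) / ((1 - π x y) * π x 0))

/-- Exponential tilting identity: the conditional outcome distribution among
nonrespondents equals the tilted respondents' distribution, normalized by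
E[exp(−Γ(x,Y)) | X=x, R=1]. -/
theorem stmt3 {Ω 𝒳 𝒴 : Type*} [Fintype Ω] [Fintype 𝒴] [Zero 𝒴]
    (w : Ω → ℝ) (hw : ∀ ω, 0 < w ω) (hsum : ∑ ω, w ω = 1)
    (X : Ω → 𝒳) (Y : Ω → 𝒴) (R : Ω → Bool) (x : 𝒳) (y : 𝒴)
    (hpos : ∀ y' : 𝒴, ∀ r : Bool,
      0 < Pr w (fun ω => X ω = x ∧ Y ω = y' ∧ R ω = r))
    (π : 𝒳 → 𝒴 → ℝ)
    (hπdef : ∀ x' y', π x' y' =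
      cPr w (fun ω => R ω = true) (fun ω => X ω = x' ∧ Y ω = y')) :
    cPr w (fun ω => Y ω = y) (fun ω => X ω = x ∧ R ω = false) =
      Real.exp (-(GammaOf π x y)) *
        cPr w (fun ω => Y ω = y) (fun ω => X ω = x ∧ R ω = true) /
      (∑ y' : 𝒴, Real.exp (-(GammaOf π x y')) *
        cPr w (fun ω => Y ω = y') (fun ω => X ω = x ∧ R ω = true)) := by

  classical
  set p : 𝒴 → Bool → ℝ := fun y' r => Pr w (fun ω => X ω = x ∧ Y ω = y' ∧ R ω = r) with hp
  have hppos : ∀ y' r, 0 < p y' r := fun y' r => hpos y' r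
  have Pr_eq : ∀ A : Ω → Prop, Pr w A = ∑ ω, if A ω then w ω else 0 := by
    intro A
    unfold Pr
    refine Finset.sum_congr rfl fun ω _ => ?_
    simp [Set.indicator_apply, Set.mem_setOf_eq]
  have Pr_congr : ∀ A B : Ω → Prop, (∀ ω, A ω ↔ B ω) → Pr w A = Pr w B := by
    intro A B h
    have hset : {ω' | A ω'} = {ω' | B ω'} := Set.ext h
    unfold Pr
    rw [hset]
  have hsplit : ∀ y', Pr w (fun ω => X ω = x ∧ Y ω = y') = p y' true + p y' false := by
    intro y'
    simp only [hp, Pr_eq, ← Finset.sum_add_distrib]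
    refine Finset.sum_congr rfl fun ω _ => ?_
    cases hR : R ω <;> by_cases h2 : X ω = x ∧ Y ω = y' <;> simp_all
  have hmarg : ∀ r, Pr w (fun ω => X ω = x ∧ R ω = r) = ∑ y', p y' r := by
    intro r
    simp only [hp, Pr]
    rw [Finset.sum_comm]
    refine Finset.sum_congr rfl fun ω _ => ?_
    have hsingle : (∑ b : 𝒴, Set.indicator {ω' | X ω' = x ∧ Y ω' = b ∧ R ω' = r} w ω)
        = Set.indicator {ω' | X ω' = x ∧ Y ω' = Y ω ∧ R ω' = r} w ω :=
      Finset.sum_eq_single_of_mem (Y ω) (Finset.mem_univ _)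
        (fun b _ hb => Set.indicator_of_notMem
          (s := {ω' | X ω' = x ∧ Y ω' = b ∧ R ω' = r})
          (fun h => hb h.2.1.symm) w)
    rw [hsingle]
    by_cases hXR : X ω = x ∧ R ω = r
    · rw [Set.indicator_of_mem
        (show ω ∈ {ω' | X ω' = x ∧ Y ω' = Y ω ∧ R ω' = r} from ⟨hXR.1, rfl, hXR.2⟩) w,
        Set.indicator_of_mem (show ω ∈ {ω' | X ω' = x ∧ R ω' = r} from hXR) w]
    · rw [Set.indicator_of_notMem
        (show ω ∉ {ω' | X ω' = x ∧ Y ω' = Y ω ∧ R ω' = r} from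
          fun h => hXR ⟨h.1, h.2.2⟩) w,
        Set.indicator_of_notMem (show ω ∉ {ω' | X ω' = x ∧ R ω' = r} from hXR) w]
  have hSt : 0 < ∑ y'', p y'' true :=
    Finset.sum_pos (fun i _ => hppos i true) Finset.univ_nonempty
  have hSf : 0 < ∑ y'', p y'' false :=
    Finset.sum_pos (fun i _ => hppos i false) Finset.univ_nonempty
  have hcP : ∀ (y' : 𝒴) (r : Bool), cPr w (fun ω => Y ω = y') (fun ω => X ω = x ∧ R ω = r)
      = p y' r / (∑ y'', p y'' r) := by
    intro y' r
    unfold cPr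
    rw [Pr_congr (fun ω => Y ω = y' ∧ X ω = x ∧ R ω = r)
      (fun ω => X ω = x ∧ Y ω = y' ∧ R ω = r) (fun ω => by tauto), hmarg]
  have hπ : ∀ y', π x y' = p y' true / (p y' true + p y' false) := by
    intro y'
    rw [hπdef]
    unfold cPr
    rw [Pr_congr (fun ω => R ω = true ∧ X ω = x ∧ Y ω = y')
      (fun ω => X ω = x ∧ Y ω = y' ∧ R ω = true) (fun ω => by tauto), hsplit]
  have hsum_ne : ∀ y', p y' true + p y' false ≠ 0 := fun y' =>
    ne_of_gt (add_pos (hppos y' true) (hppos y' false))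
  have h1π : ∀ y', 1 - π x y' = p y' false / (p y' true + p y' false) := by
    intro y'
    rw [hπ y', eq_div_iff (hsum_ne y'), sub_mul, div_mul_cancel₀ _ (hsum_ne y')]
    ring
  have hexp : ∀ y', Real.exp (-(GammaOf π x y'))
      = p y' false * p 0 true / (p y' true * p 0 false) := by
    intro y'
    unfold GammaOf
    have hz : π x y' * (1 - π x 0) / ((1 - π x y') * π x 0)
        = p y' true * p 0 false / (p y' false * p 0 true) := by
      rw [h1π y', h1π 0, hπ y', hπ 0]
      have hB := (hppos y' false).ne'
      have hC := (hppos 0 true).ne'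
      have hs := hsum_ne y'
      have hs0 := hsum_ne 0
      field_simp
      try ring
    rw [hz, Real.exp_neg, Real.exp_log]
    · rw [inv_div]
    · exact div_pos (mul_pos (hppos y' true) (hppos 0 false))
        (mul_pos (hppos y' false) (hppos 0 true))
  have hcne : p 0 true / (p 0 false * (∑ y'', p y'' true)) ≠ 0 :=
    ne_of_gt (div_pos (hppos 0 true) (mul_pos (hppos 0 false) hSt))
  have hterm : ∀ y', Real.exp (-(GammaOf π x y')) *
      cPr w (fun ω => Y ω = y') (fun ω => X ω = x ∧ R ω = true)
      = (p 0 true / (p 0 false * (∑ y'', p y'' true))) * p y' false := by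
    intro y'
    rw [hexp, hcP]
    have hA := (hppos y' true).ne'
    have hC := (hppos 0 true).ne'
    have hD := (hppos 0 false).ne'
    have hSt' := hSt.ne'
    field_simp
  rw [hcP y false]
  simp only [hterm]
  rw [← Finset.mul_sum, mul_div_mul_left _ _ hcne]
end

section
/- Double robustness key identity (outcome-model side): Let (X,Y,R₁,R₂) with R₂ ≥ R₁, true propensities π₁, π₂ ∈ (0,1) as above, and let π₂* = π₂*(X,Y) be any function with values in (0,1) (a possibly misspecified second-call propensity). Then for any integrable m, E[ { R₁ + (R₂−R₁)/π₂*(X,Y) − 1 } · { m(X,Y) − h(X) } ] = E[ (1−π₁)π₂·(1/π₂* − 1/π₂)·{ m(X,Y) − h(X) } ], where h(X) = E[ m(X,Y) | X, R₂=0 ] computed under the true law. Moreover, if additionally h satisfies E[ e^{−Γ₂}(m − h) | X, R₁=0, R₂=1 ] = 0 where Γ₂ is the true second-call log odds ratio, and 1/π₂* − 1/π₂ factors as g(X)·e^{−Γ₂(X,Y)} for some function g of X only, then the whole expectation equals 0. -/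
lemma Pr_eq_sum {Ω : Type*} [Fintype Ω] (w : Ω → ℝ) (A : Ω → Prop) [DecidablePred A] :
    Pr w A = ∑ ω, if A ω then w ω else 0 := by
  rw [Pr]
  refine Finset.sum_congr rfl fun ω _ => ?_
  rw [Set.indicator_apply]
  split_ifs with h1 h2 h2 <;> simp_all [Set.mem_setOf_eq]

lemma cEx_num_eq_sum {Ω : Type*} [Fintype Ω] (w : Ω → ℝ) (f : Ω → ℝ) (B : Ω → Prop)
    [DecidablePred B] :
    (∑ ω, Set.indicator {ω' | B ω'} (fun ω' => w ω' * f ω') ω) =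
      ∑ ω, if B ω then w ω * f ω else 0 := by
  refine Finset.sum_congr rfl fun ω _ => ?_
  rw [Set.indicator_apply]
  split_ifs with h1 h2 h2 <;> simp_all [Set.mem_setOf_eq]

lemma sum_if_congr {Ω : Type*} [Fintype Ω] (f : Ω → ℝ) (P Q : Ω → Prop)
    [DecidablePred P] [DecidablePred Q] (h : ∀ ω, P ω ↔ Q ω) :
    ∑ ω, (if P ω then f ω else 0) = ∑ ω, (if Q ω then f ω else 0) :=
  Finset.sum_congr rfl fun ω _ => if_congr (h ω) rfl rfl

lemma sum_if_pos {Ω : Type*} [Fintype Ω] (w : Ω → ℝ) (hw : ∀ ω, 0 < w ω)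
    (A : Ω → Prop) [DecidablePred A] (ω₀ : Ω) (h : A ω₀) :
    0 < ∑ ω, (if A ω then w ω else 0) := by
  apply Finset.sum_pos' (fun ω _ => by split_ifs with h; exacts [le_of_lt (hw ω), le_rfl])
  exact ⟨ω₀, Finset.mem_univ _, by simp [h, hw ω₀]⟩

lemma sum_fiber_eq {Ω ι : Type*} [Fintype Ω] [DecidableEq ι] (p : Ω → ι) (f g : Ω → ℝ)
    (H : ∀ ω₀, ∑ ω, (if p ω = p ω₀ then f ω else 0) = ∑ ω, (if p ω = p ω₀ then g ω else 0)) :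
    ∑ ω, f ω = ∑ ω, g ω := by
  rw [← Finset.sum_fiberwise_of_maps_to (fun x _ => Finset.mem_image_of_mem p (Finset.mem_univ x)) f,
      ← Finset.sum_fiberwise_of_maps_to (fun x _ => Finset.mem_image_of_mem p (Finset.mem_univ x)) g]
  refine Finset.sum_congr rfl fun i hi => ?_
  obtain ⟨ω₀, -, rfl⟩ := Finset.mem_image.mp hi
  rw [Finset.sum_filter, Finset.sum_filter]
  exact H ω₀

/-- Double robustness key identity (outcome-model side): the DR bias term
equals E[(1−π₁)π₂(1/π₂* − 1/π₂)(m−h)]; and it vanishes when h satisfies the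
exponential-tilting orthogonality and 1/π₂* − 1/π₂ factors as g(X)·e^{−Γ₂}. -/
theorem stmt10 {Ω 𝒳 𝒴 : Type*} [Fintype Ω] [Zero 𝒴]
    (w : Ω → ℝ) (hw : ∀ ω, 0 < w ω) (hsum : ∑ ω, w ω = 1)
    (X : Ω → 𝒳) (Y : Ω → 𝒴) (R₁ R₂ : Ω → Bool)
    (hmono : ∀ ω, R₁ ω = true → R₂ ω = true)
    (π₁ π₂ π₂s : 𝒳 → 𝒴 → ℝ)
    (hπ₁def : ∀ x y, π₁ x y =
      cPr w (fun ω => R₁ ω = true) (fun ω => X ω = x ∧ Y ω = y))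
    (hπ₂def : ∀ x y, π₂ x y =
      cPr w (fun ω => R₂ ω = true) (fun ω => R₁ ω = false ∧ X ω = x ∧ Y ω = y))
    (hπ₁ : ∀ ω, 0 < π₁ (X ω) (Y ω) ∧ π₁ (X ω) (Y ω) < 1)
    (hπ₂ : ∀ ω, 0 < π₂ (X ω) (Y ω) ∧ π₂ (X ω) (Y ω) < 1)
    (hπ₂s : ∀ ω, 0 < π₂s (X ω) (Y ω) ∧ π₂s (X ω) (Y ω) < 1)
    (hden : ∀ ω, 0 < Pr w (fun ω' => R₁ ω' = false ∧ X ω' = X ω ∧ Y ω' = Y ω))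
    (m : 𝒳 → 𝒴 → ℝ) (h : 𝒳 → ℝ)
    (hdenR₂ : ∀ ω, 0 < Pr w (fun ω' => X ω' = X ω ∧ R₂ ω' = false))
    (hdef : ∀ x, h x = cEx w (fun ω => m (X ω) (Y ω))
      (fun ω => X ω = x ∧ R₂ ω = false)) :
    (Ex w (fun ω =>
        (ind (R₁ ω) + (ind (R₂ ω) - ind (R₁ ω)) / π₂s (X ω) (Y ω) - 1) *
          (m (X ω) (Y ω) - h (X ω))) =
      Ex w (fun ω =>
        (1 - π₁ (X ω) (Y ω)) * π₂ (X ω) (Y ω) *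
          (1 / π₂s (X ω) (Y ω) - 1 / π₂ (X ω) (Y ω)) *
          (m (X ω) (Y ω) - h (X ω)))) ∧
    ((∀ x, 0 < Pr w (fun ω => X ω = x ∧ R₁ ω = false ∧ R₂ ω = true) →
        cEx w (fun ω => Real.exp (-(GammaOf π₂ x (Y ω))) * (m (X ω) (Y ω) - h x))
          (fun ω => X ω = x ∧ R₁ ω = false ∧ R₂ ω = true) = 0) →
      (∃ g : 𝒳 → ℝ, ∀ ω,
        1 / π₂s (X ω) (Y ω) - 1 / π₂ (X ω) (Y ω) =
          g (X ω) * Real.exp (-(GammaOf π₂ (X ω) (Y ω)))) →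
      Ex w (fun ω =>
        (ind (R₁ ω) + (ind (R₂ ω) - ind (R₁ ω)) / π₂s (X ω) (Y ω) - 1) *
          (m (X ω) (Y ω) - h (X ω))) = 0) := by
  classical
  have hTpos : ∀ ω₀ : Ω,
      0 < ∑ ω, (if X ω = X ω₀ ∧ Y ω = Y ω₀ then w ω else 0) :=
    fun ω₀ => sum_if_pos w hw _ ω₀ ⟨rfl, rfl⟩
  have hsplit : ∀ ω₀ : Ω,
      (∑ ω, if X ω = X ω₀ ∧ Y ω = Y ω₀ then w ω else 0) =
        (∑ ω, if (X ω = X ω₀ ∧ Y ω = Y ω₀) ∧ R₁ ω = true then w ω else 0) +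
        ((∑ ω, if (X ω = X ω₀ ∧ Y ω = Y ω₀) ∧ R₁ ω = false ∧ R₂ ω = true then w ω else 0) +
         (∑ ω, if (X ω = X ω₀ ∧ Y ω = Y ω₀) ∧ R₁ ω = false ∧ R₂ ω = false then w ω else 0)) := by
    intro ω₀
    rw [← Finset.sum_add_distrib, ← Finset.sum_add_distrib]
    refine Finset.sum_congr rfl fun ω _ => ?_
    by_cases hf : X ω = X ω₀ ∧ Y ω = Y ω₀
    · cases hR1 : R₁ ω
      · cases hR2 : R₂ ω
        · simp [hf, hR1, hR2]
        · simp [hf, hR1, hR2]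
      · have hR2 := hmono ω hR1
        simp [hf, hR1, hR2]
    · simp [hf]
  have hS1 : ∀ ω₀ : Ω,
      (∑ ω, if (X ω = X ω₀ ∧ Y ω = Y ω₀) ∧ R₁ ω = true then w ω else 0) =
        π₁ (X ω₀) (Y ω₀) * (∑ ω, if X ω = X ω₀ ∧ Y ω = Y ω₀ then w ω else 0) := by
    intro ω₀
    have hd := hπ₁def (X ω₀) (Y ω₀)
    rw [cPr, Pr_eq_sum, Pr_eq_sum] at hd
    rw [hd,
      sum_if_congr w (fun ω => R₁ ω = true ∧ (X ω = X ω₀ ∧ Y ω = Y ω₀))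
        (fun ω => (X ω = X ω₀ ∧ Y ω = Y ω₀) ∧ R₁ ω = true) (fun ω => and_comm),
      div_mul_cancel₀ _ (ne_of_gt (hTpos ω₀))]
  have hS2 : ∀ ω₀ : Ω,
      (∑ ω, if (X ω = X ω₀ ∧ Y ω = Y ω₀) ∧ R₁ ω = false ∧ R₂ ω = true then w ω else 0) =
        π₂ (X ω₀) (Y ω₀) *
        ((∑ ω, if (X ω = X ω₀ ∧ Y ω = Y ω₀) ∧ R₁ ω = false ∧ R₂ ω = true then w ω else 0) +
         (∑ ω, if (X ω = X ω₀ ∧ Y ω = Y ω₀) ∧ R₁ ω = false ∧ R₂ ω = false then w ω else 0)) := by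
    intro ω₀
    have hd := hπ₂def (X ω₀) (Y ω₀)
    rw [cPr, Pr_eq_sum, Pr_eq_sum] at hd
    have hnum := sum_if_congr w
      (fun ω => R₂ ω = true ∧ (R₁ ω = false ∧ X ω = X ω₀ ∧ Y ω = Y ω₀))
      (fun ω => (X ω = X ω₀ ∧ Y ω = Y ω₀) ∧ R₁ ω = false ∧ R₂ ω = true) (fun ω => by tauto)
    have hde : (∑ ω, if R₁ ω = false ∧ X ω = X ω₀ ∧ Y ω = Y ω₀ then w ω else 0) =
        (∑ ω, if (X ω = X ω₀ ∧ Y ω = Y ω₀) ∧ R₁ ω = false ∧ R₂ ω = true then w ω else 0) +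
        (∑ ω, if (X ω = X ω₀ ∧ Y ω = Y ω₀) ∧ R₁ ω = false ∧ R₂ ω = false then w ω else 0) := by
      rw [← Finset.sum_add_distrib]
      refine Finset.sum_congr rfl fun ω _ => ?_
      by_cases hf : X ω = X ω₀ ∧ Y ω = Y ω₀
      · cases hR1 : R₁ ω
        · cases hR2 : R₂ ω
          · simp [hf, hR1, hR2]
          · simp [hf, hR1, hR2]
        · simp [hf, hR1]
      · have : ¬ (R₁ ω = false ∧ X ω = X ω₀ ∧ Y ω = Y ω₀) := fun hh => hf hh.2
        simp only [if_neg this, if_neg (fun hh : (X ω = X ω₀ ∧ Y ω = Y ω₀) ∧ _ => hf hh.1),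
          if_neg (fun hh : (X ω = X ω₀ ∧ Y ω = Y ω₀) ∧ _ => hf hh.1), add_zero]
    have hpos : (0:ℝ) <
        (∑ ω, if (X ω = X ω₀ ∧ Y ω = Y ω₀) ∧ R₁ ω = false ∧ R₂ ω = true then w ω else 0) +
        (∑ ω, if (X ω = X ω₀ ∧ Y ω = Y ω₀) ∧ R₁ ω = false ∧ R₂ ω = false then w ω else 0) := by
      rw [← hde]
      have := hden ω₀
      rwa [Pr_eq_sum] at this
    rw [hd, hnum, hde, div_mul_cancel₀ _ (ne_of_gt hpos)]
  -- Part 1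
  have part1 : Ex w (fun ω =>
        (ind (R₁ ω) + (ind (R₂ ω) - ind (R₁ ω)) / π₂s (X ω) (Y ω) - 1) *
          (m (X ω) (Y ω) - h (X ω))) =
      Ex w (fun ω =>
        (1 - π₁ (X ω) (Y ω)) * π₂ (X ω) (Y ω) *
          (1 / π₂s (X ω) (Y ω) - 1 / π₂ (X ω) (Y ω)) *
          (m (X ω) (Y ω) - h (X ω))) := by
    rw [Ex, Ex]
    apply sum_fiber_eq (fun ω => (X ω, Y ω))
    intro ω₀
    have hbpos : 0 < π₂ (X ω₀) (Y ω₀) := (hπ₂ ω₀).1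
    have hspos : 0 < π₂s (X ω₀) (Y ω₀) := (hπ₂s ω₀).1
    have bridge : ∀ f : Ω → ℝ,
        (∑ ω, if (X ω, Y ω) = (X ω₀, Y ω₀) then f ω else 0) =
          ∑ ω, if X ω = X ω₀ ∧ Y ω = Y ω₀ then f ω else 0 :=
      fun f => sum_if_congr f _ _ (fun ω => Prod.ext_iff)
    rw [bridge, bridge]
    have hLHS : (∑ ω, if X ω = X ω₀ ∧ Y ω = Y ω₀ then
        w ω * ((ind (R₁ ω) + (ind (R₂ ω) - ind (R₁ ω)) / π₂s (X ω) (Y ω) - 1) *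
          (m (X ω) (Y ω) - h (X ω))) else 0) =
        ((1 / π₂s (X ω₀) (Y ω₀) - 1) * (m (X ω₀) (Y ω₀) - h (X ω₀))) *
          (∑ ω, if (X ω = X ω₀ ∧ Y ω = Y ω₀) ∧ R₁ ω = false ∧ R₂ ω = true then w ω else 0) +
        (-(m (X ω₀) (Y ω₀) - h (X ω₀))) *
          (∑ ω, if (X ω = X ω₀ ∧ Y ω = Y ω₀) ∧ R₁ ω = false ∧ R₂ ω = false then w ω else 0) := by
      rw [Finset.mul_sum, Finset.mul_sum, ← Finset.sum_add_distrib]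
      refine Finset.sum_congr rfl fun ω _ => ?_
      by_cases hf : X ω = X ω₀ ∧ Y ω = Y ω₀
      · obtain ⟨hx, hy⟩ := hf
        rw [if_pos ⟨hx, hy⟩]
        cases hR1 : R₁ ω
        · cases hR2 : R₂ ω
          · rw [if_neg (by simp), if_pos ⟨⟨hx, hy⟩, rfl, rfl⟩, hx, hy]
            simp [ind]; ring
          · rw [if_pos ⟨⟨hx, hy⟩, rfl, rfl⟩, if_neg (by simp), hx, hy]
            simp [ind]; ring
        · have hR2 := hmono ω hR1
          rw [if_neg (by simp), if_neg (by simp), hR2]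
          simp [ind]
      · rw [if_neg hf, if_neg (fun hh => hf hh.1), if_neg (fun hh => hf hh.1)]
        ring
    have hRHS : (∑ ω, if X ω = X ω₀ ∧ Y ω = Y ω₀ then
        w ω * ((1 - π₁ (X ω) (Y ω)) * π₂ (X ω) (Y ω) *
          (1 / π₂s (X ω) (Y ω) - 1 / π₂ (X ω) (Y ω)) *
          (m (X ω) (Y ω) - h (X ω))) else 0) =
        ((1 - π₁ (X ω₀) (Y ω₀)) * π₂ (X ω₀) (Y ω₀) *
          (1 / π₂s (X ω₀) (Y ω₀) - 1 / π₂ (X ω₀) (Y ω₀)) * (m (X ω₀) (Y ω₀) - h (X ω₀))) *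
          (∑ ω, if X ω = X ω₀ ∧ Y ω = Y ω₀ then w ω else 0) := by
      rw [Finset.mul_sum]
      refine Finset.sum_congr rfl fun ω _ => ?_
      by_cases hf : X ω = X ω₀ ∧ Y ω = Y ω₀
      · obtain ⟨hx, hy⟩ := hf
        rw [if_pos ⟨hx, hy⟩, if_pos ⟨hx, hy⟩, hx, hy]; ring
      · rw [if_neg hf, if_neg hf]; ring
    rw [hLHS, hRHS]
    have e0 := hsplit ω₀
    have e1 := hS1 ω₀
    have e2 := hS2 ω₀
    set T := ∑ ω, (if X ω = X ω₀ ∧ Y ω = Y ω₀ then w ω else 0) with hTd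
    set A2 := ∑ ω, (if (X ω = X ω₀ ∧ Y ω = Y ω₀) ∧ R₁ ω = false ∧ R₂ ω = true then w ω else 0)
      with hA2d
    set A3 := ∑ ω, (if (X ω = X ω₀ ∧ Y ω = Y ω₀) ∧ R₁ ω = false ∧ R₂ ω = false then w ω else 0)
      with hA3d
    have e3 : A2 + A3 = (1 - π₁ (X ω₀) (Y ω₀)) * T := by linarith
    have e4 : A2 = π₂ (X ω₀) (Y ω₀) * ((1 - π₁ (X ω₀) (Y ω₀)) * T) := by rw [e2, e3]
    have e5 : A3 = (1 - π₁ (X ω₀) (Y ω₀)) * T -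
        π₂ (X ω₀) (Y ω₀) * ((1 - π₁ (X ω₀) (Y ω₀)) * T) := by linarith
    rw [e4, e5]
    field_simp
    ring
  refine ⟨part1, ?_⟩
  rintro horth ⟨g, hg⟩
  rw [part1, Ex]
  have stepA : (∑ ω, w ω *
      ((1 - π₁ (X ω) (Y ω)) * π₂ (X ω) (Y ω) *
        (1 / π₂s (X ω) (Y ω) - 1 / π₂ (X ω) (Y ω)) * (m (X ω) (Y ω) - h (X ω)))) =
      ∑ ω, (if R₁ ω = false ∧ R₂ ω = true then w ω else 0) *
        (g (X ω) * Real.exp (-(GammaOf π₂ (X ω) (Y ω))) * (m (X ω) (Y ω) - h (X ω))) := by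
    apply sum_fiber_eq (fun ω => (X ω, Y ω))
    intro ω₀
    have bridge : ∀ f : Ω → ℝ,
        (∑ ω, if (X ω, Y ω) = (X ω₀, Y ω₀) then f ω else 0) =
          ∑ ω, if X ω = X ω₀ ∧ Y ω = Y ω₀ then f ω else 0 :=
      fun f => sum_if_congr f _ _ (fun ω => Prod.ext_iff)
    rw [bridge, bridge]
    have hL : (∑ ω, if X ω = X ω₀ ∧ Y ω = Y ω₀ then
        w ω * ((1 - π₁ (X ω) (Y ω)) * π₂ (X ω) (Y ω) *
          (1 / π₂s (X ω) (Y ω) - 1 / π₂ (X ω) (Y ω)) * (m (X ω) (Y ω) - h (X ω)))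
        else 0) =
        ((1 - π₁ (X ω₀) (Y ω₀)) * π₂ (X ω₀) (Y ω₀) *
          (g (X ω₀) * Real.exp (-(GammaOf π₂ (X ω₀) (Y ω₀)))) *
          (m (X ω₀) (Y ω₀) - h (X ω₀))) *
          (∑ ω, if X ω = X ω₀ ∧ Y ω = Y ω₀ then w ω else 0) := by
      rw [Finset.mul_sum]
      refine Finset.sum_congr rfl fun ω _ => ?_
      by_cases hf : X ω = X ω₀ ∧ Y ω = Y ω₀
      · obtain ⟨hx, hy⟩ := hf
        rw [if_pos ⟨hx, hy⟩, if_pos ⟨hx, hy⟩, hg ω, hx, hy]; ring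
      · rw [if_neg hf, if_neg hf]; ring
    have hR : (∑ ω, if X ω = X ω₀ ∧ Y ω = Y ω₀ then
        (if R₁ ω = false ∧ R₂ ω = true then w ω else 0) *
          (g (X ω) * Real.exp (-(GammaOf π₂ (X ω) (Y ω))) * (m (X ω) (Y ω) - h (X ω)))
        else 0) =
        (g (X ω₀) * Real.exp (-(GammaOf π₂ (X ω₀) (Y ω₀))) *
          (m (X ω₀) (Y ω₀) - h (X ω₀))) *
          (∑ ω, if (X ω = X ω₀ ∧ Y ω = Y ω₀) ∧ R₁ ω = false ∧ R₂ ω = true then w ω else 0) := by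
      rw [Finset.mul_sum]
      refine Finset.sum_congr rfl fun ω _ => ?_
      by_cases hf : X ω = X ω₀ ∧ Y ω = Y ω₀
      · obtain ⟨hx, hy⟩ := hf
        rw [if_pos ⟨hx, hy⟩]
        by_cases hr : R₁ ω = false ∧ R₂ ω = true
        · rw [if_pos hr, if_pos ⟨⟨hx, hy⟩, hr⟩, hx, hy]; ring
        · rw [if_neg hr, if_neg (fun hh => hr hh.2)]; ring
      · rw [if_neg hf, if_neg (fun hh => hf hh.1)]; ring
    rw [hL, hR]
    have e0 := hsplit ω₀
    have e1 := hS1 ω₀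
    have e2 := hS2 ω₀
    set T := ∑ ω, (if X ω = X ω₀ ∧ Y ω = Y ω₀ then w ω else 0) with hTd
    set A2 := ∑ ω, (if (X ω = X ω₀ ∧ Y ω = Y ω₀) ∧ R₁ ω = false ∧ R₂ ω = true then w ω else 0)
      with hA2d
    set A3 := ∑ ω, (if (X ω = X ω₀ ∧ Y ω = Y ω₀) ∧ R₁ ω = false ∧ R₂ ω = false then w ω else 0)
      with hA3d
    have e3 : A2 + A3 = (1 - π₁ (X ω₀) (Y ω₀)) * T := by linarith
    have e4 : A2 = π₂ (X ω₀) (Y ω₀) * ((1 - π₁ (X ω₀) (Y ω₀)) * T) := by rw [e2, e3]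
    rw [e4]; ring
  rw [stepA]
  have stepB : (∑ ω, (if R₁ ω = false ∧ R₂ ω = true then w ω else 0) *
        (g (X ω) * Real.exp (-(GammaOf π₂ (X ω) (Y ω))) * (m (X ω) (Y ω) - h (X ω)))) =
      ∑ _ω : Ω, (0 : ℝ) := by
    apply sum_fiber_eq X
    intro ω₀
    have hL : (∑ ω, if X ω = X ω₀ then
        (if R₁ ω = false ∧ R₂ ω = true then w ω else 0) *
          (g (X ω) * Real.exp (-(GammaOf π₂ (X ω) (Y ω))) * (m (X ω) (Y ω) - h (X ω)))
        else 0) =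
        g (X ω₀) * ∑ ω, (if X ω = X ω₀ ∧ R₁ ω = false ∧ R₂ ω = true then
          w ω * (Real.exp (-(GammaOf π₂ (X ω₀) (Y ω))) * (m (X ω) (Y ω) - h (X ω₀)))
          else 0) := by
      rw [Finset.mul_sum]
      refine Finset.sum_congr rfl fun ω _ => ?_
      by_cases hf : X ω = X ω₀
      · rw [if_pos hf]
        by_cases hr : R₁ ω = false ∧ R₂ ω = true
        · rw [if_pos hr, if_pos ⟨hf, hr⟩, hf]; ring
        · rw [if_neg hr, if_neg (fun hh => hr hh.2)]; ring
      · rw [if_neg hf, if_neg (fun hh => hf hh.1)]; ring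
    rw [hL]
    have hN : (∑ ω, (if X ω = X ω₀ ∧ R₁ ω = false ∧ R₂ ω = true then
        w ω * (Real.exp (-(GammaOf π₂ (X ω₀) (Y ω))) * (m (X ω) (Y ω) - h (X ω₀)))
        else 0)) = 0 := by
      by_cases hp : 0 < Pr w (fun ω => X ω = X ω₀ ∧ R₁ ω = false ∧ R₂ ω = true)
      · have hcex := horth (X ω₀) hp
        rw [cEx, div_eq_zero_iff] at hcex
        rcases hcex with hnum | hP
        · rw [cEx_num_eq_sum] at hnum
          exact hnum
        · exact absurd hP (ne_of_gt hp)
      · refine Finset.sum_eq_zero fun ω _ => ?_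
        have hzero : ¬ (X ω = X ω₀ ∧ R₁ ω = false ∧ R₂ ω = true) := by
          intro hA
          exact hp (by rw [Pr_eq_sum]; exact sum_if_pos w hw _ ω hA)
        rw [if_neg hzero]
    rw [hN, mul_zero]
    exact (Finset.sum_eq_zero fun ω _ => by split_ifs <;> rfl).symm
  rw [stepB]
  simp
end

section
/- Exact identification in the binary case: Let p₁,...,p₆ > 0 with p₁+...+p₆ = 1 denote P(Y=0,R₁=0,R₂=0), P(Y=1,R₁=0,R₂=0), P(Y=0,R₁=0,R₂=1), P(Y=1,R₁=0,R₂=1), P(Y=0,R₁=1,R₂=1), P(Y=1,R₁=1,R₂=1). Suppose the stableness constraint p₆(p₁+p₃)/(p₅(p₂+p₄)) = p₄p₁/(p₂p₃) holds. Then given (p₃,p₄,p₅,p₆) with p₃+p₄+p₅+p₆ < 1, the pair (p₁,p₂) with p₁,p₂ > 0 and p₁+p₂ = 1−p₃−p₄−p₅−p₆ satisfying the constraint is unique. -/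
/-- Exact identification in the binary case: given positive observed cell
probabilities (p₃,p₄,p₅,p₆) with total mass less than 1, the pair (p₁,p₂) of
positive unobserved cell probabilities summing to the remaining mass and
satisfying the stableness constraint
p₆(p₁+p₃)/(p₅(p₂+p₄)) = p₄p₁/(p₂p₃) is unique. -/
theorem stmt12 (p₃ p₄ p₅ p₆ : ℝ)
    (h₃ : 0 < p₃) (h₄ : 0 < p₄) (h₅ : 0 < p₅) (h₆ : 0 < p₆)
    (hs : p₃ + p₄ + p₅ + p₆ < 1)
    (p₁ p₂ q₁ q₂ : ℝ)
    (hp₁ : 0 < p₁) (hp₂ : 0 < p₂) (hq₁ : 0 < q₁) (hq₂ : 0 < q₂)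
    (hpsum : p₁ + p₂ = 1 - p₃ - p₄ - p₅ - p₆)
    (hqsum : q₁ + q₂ = 1 - p₃ - p₄ - p₅ - p₆)
    (hpc : p₆ * (p₁ + p₃) / (p₅ * (p₂ + p₄)) = p₄ * p₁ / (p₂ * p₃))
    (hqc : p₆ * (q₁ + p₃) / (p₅ * (q₂ + p₄)) = p₄ * q₁ / (q₂ * p₃)) :
    p₁ = q₁ ∧ p₂ = q₂ := by
  have hdp : (0:ℝ) < p₅ * (p₂ + p₄) := by positivity
  have hdp' : (0:ℝ) < p₂ * p₃ := by positivity
  have hdq : (0:ℝ) < p₅ * (q₂ + p₄) := by positivity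
  have hdq' : (0:ℝ) < q₂ * p₃ := by positivity
  have A : p₆ * (p₁ + p₃) * (p₂ * p₃) = p₄ * p₁ * (p₅ * (p₂ + p₄)) :=
    (div_eq_div_iff hdp.ne' hdp'.ne').mp hpc
  have B : p₆ * (q₁ + p₃) * (q₂ * p₃) = p₄ * q₁ * (p₅ * (q₂ + p₄)) :=
    (div_eq_div_iff hdq.ne' hdq'.ne').mp hqc
  have hsum : p₁ + p₂ = q₁ + q₂ := by rw [hpsum, hqsum]
  have h0 : p₃ * p₆ ≠ 0 := by positivity
  have key : p₃ * p₆ * ((p₁ + p₃) * p₂ * (q₁ * (q₂ + p₄))) =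
      p₃ * p₆ * ((q₁ + p₃) * q₂ * (p₁ * (p₂ + p₄))) := by
    linear_combination (q₁ * (q₂ + p₄)) * A - (p₁ * (p₂ + p₄)) * B
  have key' : (p₁ + p₃) * p₂ * (q₁ * (q₂ + p₄)) =
      (q₁ + p₃) * q₂ * (p₁ * (p₂ + p₄)) := mul_left_cancel₀ h0 key
  have h1 : p₁ = q₁ := by
    rcases lt_trichotomy p₁ q₁ with h | h | h
    · exfalso
      have h2 : q₂ < p₂ := by linarith
      nlinarith [mul_pos (mul_pos h₃ (sub_pos.mpr h)) (mul_pos hp₂ (by linarith : (0:ℝ) < q₂ + p₄)),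
        mul_pos (mul_pos (by linarith : (0:ℝ) < q₁ + p₃) hp₁) (mul_pos h₄ (sub_pos.mpr h2))]
    · exact h
    · exfalso
      have h2 : p₂ < q₂ := by linarith
      nlinarith [mul_pos (mul_pos h₃ (sub_pos.mpr h)) (mul_pos hq₂ (by linarith : (0:ℝ) < p₂ + p₄)),
        mul_pos (mul_pos (by linarith : (0:ℝ) < p₁ + p₃) hq₁) (mul_pos h₄ (sub_pos.mpr h2))]
  exact ⟨h1, by linarith⟩
end

section
/- Odds-ratio difference representation: Let (X, Y, R₁, R₂) take finitely many values with R₂ ≥ R₁ ∈ {0,1} and all relevant probabilities positive. With A_k(x) = logit π_k(x,0) and Γ_k as above (k=1,2), and D(x) = A₂(x) − A₁(x), if Γ₁ ≡ Γ₂ then for all (x,y): P(R₁=1, X=x, Y=y) / P(R₁=0, X=x, Y=y) = P(R₁=1, X=x, Y=y) / P(R₂=1, R₁=0, X=x, Y=y) − exp(−D(x)). -/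
/-- logit(p) = log(p / (1 − p)). -/
noncomputable def logit (p : ℝ) : ℝ := Real.log (p / (1 - p))

/-!
Each propensity is a ratio `p / (p + q)` of positive masses, so its logit is the log odds
`log p - log q` and `Γ` is a difference of logits. Hence `Γ₁(x, y) = Γ₂(x, y)` turns `-D(x)` into
`logit π₁(x, y) - logit π₂(x, y)`, whose exponential is the odds ratio
`P(R₁=1) P(R₂=0, R₁=0) / (P(R₁=0) P(R₂=1, R₁=0))` at `(x, y)`; splitting
`P(R₁=0) = P(R₂=1, R₁=0) + P(R₂=0, R₁=0)` then gives the identity.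
-/

open Real Set

section Probability

variable {Ω : Type*} [Fintype Ω] (w : Ω → ℝ)

theorem Pr_split_bool (b : Ω → Bool) (A : Ω → Prop) :
    Pr w A = Pr w (fun ω => b ω = true ∧ A ω) + Pr w (fun ω => b ω = false ∧ A ω) := by
  classical
  simp only [Pr, ← Finset.sum_add_distrib, Set.indicator_apply, Set.mem_ofPred_eq]
  refine Finset.sum_congr rfl fun ω _ => ?_
  rcases Bool.eq_false_or_eq_true (b ω) with hb | hb <;> simp [hb]

theorem cPr_bool_eq_div_add (b : Ω → Bool) (B : Ω → Prop) :
    cPr w (fun ω => b ω = true) B =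
      Pr w (fun ω => b ω = true ∧ B ω) /
        (Pr w (fun ω => b ω = true ∧ B ω) + Pr w (fun ω => b ω = false ∧ B ω)) := by
  rw [cPr, ← Pr_split_bool]

end Probability

theorem div_add_mem_Ioo {p q : ℝ} (hp : 0 < p) (hq : 0 < q) : p / (p + q) ∈ Ioo 0 1 :=
  ⟨by positivity, (div_lt_one (by positivity)).2 (by linarith)⟩

theorem logit_div_add {p q : ℝ} (hp : 0 < p) (hq : 0 < q) :
    logit (p / (p + q)) = log p - log q := by
  have hodds : p / (p + q) / (1 - p / (p + q)) = p / q := by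
    have : p + q ≠ 0 := by positivity
    field_simp [hq.ne']
    ring
  rw [logit, hodds, log_div hp.ne' hq.ne']

theorem div_add_eq_div_sub_exp_log {a c d : ℝ} (ha : 0 < a) (hc : 0 < c) (hd : 0 < d) :
    a / (c + d) = a / c - exp (log a - log (c + d) - (log c - log d)) := by
  rw [exp_sub, exp_sub, exp_sub, exp_log ha, exp_log (add_pos hc hd), exp_log hc, exp_log hd]
  field_simp
  ring

theorem GammaOf_eq_logit_sub {𝒳 𝒴 : Type*} [Zero 𝒴] {ρ : 𝒳 → 𝒴 → ℝ} {x : 𝒳} {y : 𝒴}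
    (hy : ρ x y ∈ Ioo 0 1) (h0 : ρ x 0 ∈ Ioo 0 1) :
    GammaOf ρ x y = logit (ρ x y) - logit (ρ x 0) := by
  have hy' : 1 - ρ x y ≠ 0 := (sub_pos.2 hy.2).ne'
  have h0' : 1 - ρ x 0 ≠ 0 := (sub_pos.2 h0.2).ne'
  have hratio : ρ x y * (1 - ρ x 0) / ((1 - ρ x y) * ρ x 0) =
      ρ x y / (1 - ρ x y) / (ρ x 0 / (1 - ρ x 0)) := by
    field_simp
  rw [GammaOf, hratio, logit, logit,
    log_div (div_ne_zero hy.1.ne' hy') (div_ne_zero h0.1.ne' h0')]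

theorem stmt14_general {Ω 𝒳 𝒴 : Type*} [Fintype Ω] [Zero 𝒴]
    (w : Ω → ℝ)
    (X : Ω → 𝒳) (Y : Ω → 𝒴) (R₁ R₂ : Ω → Bool)
    (hpos₁ : ∀ x y, 0 < Pr w (fun ω => R₁ ω = true ∧ X ω = x ∧ Y ω = y))
    (hpos₂ : ∀ x y, 0 < Pr w (fun ω => R₂ ω = true ∧ R₁ ω = false ∧ X ω = x ∧ Y ω = y))
    (hpos₃ : ∀ x y, 0 < Pr w (fun ω => R₂ ω = false ∧ R₁ ω = false ∧ X ω = x ∧ Y ω = y))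
    (π₁ π₂ : 𝒳 → 𝒴 → ℝ)
    (hπ₁def : ∀ x y, π₁ x y =
      cPr w (fun ω => R₁ ω = true) (fun ω => X ω = x ∧ Y ω = y))
    (hπ₂def : ∀ x y, π₂ x y =
      cPr w (fun ω => R₂ ω = true) (fun ω => R₁ ω = false ∧ X ω = x ∧ Y ω = y))
    (hΓ : ∀ x y, GammaOf π₁ x y = GammaOf π₂ x y) :
    ∀ x y,
      Pr w (fun ω => R₁ ω = true ∧ X ω = x ∧ Y ω = y) /
          Pr w (fun ω => R₁ ω = false ∧ X ω = x ∧ Y ω = y) =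
        Pr w (fun ω => R₁ ω = true ∧ X ω = x ∧ Y ω = y) /
            Pr w (fun ω => R₂ ω = true ∧ R₁ ω = false ∧ X ω = x ∧ Y ω = y) -
          Real.exp (-(logit (π₂ x 0) - logit (π₁ x 0))) := by
  intro x y
  have hmiss : ∀ y, Pr w (fun ω => R₁ ω = false ∧ X ω = x ∧ Y ω = y) =
      Pr w (fun ω => R₂ ω = true ∧ R₁ ω = false ∧ X ω = x ∧ Y ω = y) +
        Pr w (fun ω => R₂ ω = false ∧ R₁ ω = false ∧ X ω = x ∧ Y ω = y) :=
    fun y => Pr_split_bool w R₂ _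
  have hmiss_pos : ∀ y, 0 < Pr w (fun ω => R₁ ω = false ∧ X ω = x ∧ Y ω = y) :=
    fun y => hmiss y ▸ add_pos (hpos₂ x y) (hpos₃ x y)
  have hπ₁ : ∀ y, π₁ x y = _ := fun y => (hπ₁def x y).trans (cPr_bool_eq_div_add w R₁ _)
  have hπ₂ : ∀ y, π₂ x y = _ := fun y => (hπ₂def x y).trans (cPr_bool_eq_div_add w R₂ _)
  have hmem₁ : ∀ y, π₁ x y ∈ Ioo 0 1 := fun y => hπ₁ y ▸ div_add_mem_Ioo (hpos₁ x y) (hmiss_pos y)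
  have hmem₂ : ∀ y, π₂ x y ∈ Ioo 0 1 := fun y => hπ₂ y ▸ div_add_mem_Ioo (hpos₂ x y) (hpos₃ x y)
  have hD : -(logit (π₂ x 0) - logit (π₁ x 0)) = logit (π₁ x y) - logit (π₂ x y) := by
    have h := hΓ x y
    rw [GammaOf_eq_logit_sub (hmem₁ y) (hmem₁ 0), GammaOf_eq_logit_sub (hmem₂ y) (hmem₂ 0)] at h
    linarith
  rw [hD, hπ₁, hπ₂, logit_div_add (hpos₁ x y) (hmiss_pos y),
    logit_div_add (hpos₂ x y) (hpos₃ x y), hmiss]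
  exact div_add_eq_div_sub_exp_log (hpos₁ x y) (hpos₂ x y) (hpos₃ x y)

/-- Odds-ratio difference representation: with D(x) = A₂(x) − A₁(x) and
Γ₁ ≡ Γ₂, the unidentified odds P(R₁=1,x,y)/P(R₁=0,x,y) equal
P(R₁=1,x,y)/P(R₂=1,R₁=0,x,y) − exp(−D(x)). -/
theorem stmt14 {Ω 𝒳 𝒴 : Type*} [Fintype Ω] [Fintype 𝒳] [Fintype 𝒴] [Zero 𝒴]
    (w : Ω → ℝ) (hw : ∀ ω, 0 < w ω) (hsum : ∑ ω, w ω = 1)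
    (X : Ω → 𝒳) (Y : Ω → 𝒴) (R₁ R₂ : Ω → Bool)
    (hmono : ∀ ω, R₁ ω = true → R₂ ω = true)
    (hpos₁ : ∀ x y, 0 < Pr w (fun ω => R₁ ω = true ∧ X ω = x ∧ Y ω = y))
    (hpos₂ : ∀ x y, 0 < Pr w (fun ω => R₂ ω = true ∧ R₁ ω = false ∧ X ω = x ∧ Y ω = y))
    (hpos₃ : ∀ x y, 0 < Pr w (fun ω => R₂ ω = false ∧ R₁ ω = false ∧ X ω = x ∧ Y ω = y))
    (π₁ π₂ : 𝒳 → 𝒴 → ℝ)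
    (hπ₁def : ∀ x y, π₁ x y =
      cPr w (fun ω => R₁ ω = true) (fun ω => X ω = x ∧ Y ω = y))
    (hπ₂def : ∀ x y, π₂ x y =
      cPr w (fun ω => R₂ ω = true) (fun ω => R₁ ω = false ∧ X ω = x ∧ Y ω = y))
    (hΓ : ∀ x y, GammaOf π₁ x y = GammaOf π₂ x y) :
    ∀ x y,
      Pr w (fun ω => R₁ ω = true ∧ X ω = x ∧ Y ω = y) /
          Pr w (fun ω => R₁ ω = false ∧ X ω = x ∧ Y ω = y) =
        Pr w (fun ω => R₁ ω = true ∧ X ω = x ∧ Y ω = y) /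
            Pr w (fun ω => R₂ ω = true ∧ R₁ ω = false ∧ X ω = x ∧ Y ω = y) -
          Real.exp (-(logit (π₂ x 0) - logit (π₁ x 0))) :=
  stmt14_general w X Y R₁ R₂ hpos₁ hpos₂ hpos₃ π₁ π₂ hπ₁def hπ₂def hΓ
end
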